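/- Let G₁ and G₂ be groups acting on connected topological spaces X₁ and X₂ respectively, by homeomorphisms. If the transformation groupoids X₁ ⋊ G₁ and X₂ ⋊ G₂ are isomorphic as topological groupoids, then G₁ ≅ G₂ as groups. -/

import Mathlib

/-!
Since `X₁` is connected and `G₂` discrete, the `G₂`-label of the arrow `F (x, g)` does not
depend on `x`; together with compatibility with the range map this writes `F` as
`Prod.map f φ` for a single map `φ : G₁ → G₂`, which is then bijective because `F` is, and
multiplicative by compatibility with composition.
-/

lemma Continuous.snd_apply_eq_of_preconnectedSpace {X G Y H : Type*} [TopologicalSpace X]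
    [PreconnectedSpace X] [TopologicalSpace G] [TopologicalSpace Y] [TopologicalSpace H]
    [DiscreteTopology H] {F : X × G → Y × H} (hF : Continuous F) (g : G) (x y : X) :
    (F (x, g)).2 = (F (y, g)).2 := by
  have hlabel : Continuous fun x => (F (x, g)).2 :=
    continuous_snd.comp (hF.comp (continuous_id.prodMk continuous_const))
  exact ((IsLocallyConstant.iff_continuous _).2 hlabel).apply_eq_of_preconnectedSpace x y

theorem group_iso_of_transformation_groupoid_iso_general
    {X₁ G₁ X₂ G₂ : Type*}
    [TopologicalSpace X₁] [ConnectedSpace X₁] [TopologicalSpace G₁]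
    [Group G₁] [MulAction G₁ X₁]
    [TopologicalSpace X₂] [TopologicalSpace G₂] [DiscreteTopology G₂]
    [Group G₂]
    (F : (X₁ × G₁) ≃ₜ (X₂ × G₂)) (f : X₁ ≃ₜ X₂)
    (hrange : ∀ p : X₁ × G₁, (F p).1 = f p.1)
    (hcomp : ∀ (x : X₁) (g h : G₁),
      F (x, g * h) = ((F (x, g)).1, (F (x, g)).2 * (F (g⁻¹ • x, h)).2)) :
    Nonempty (G₁ ≃* G₂) := by
  obtain ⟨x₀⟩ : Nonempty X₁ := inferInstance
  have label_eq := F.continuous.snd_apply_eq_of_preconnectedSpace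
  let φ : G₁ → G₂ := fun g => (F (x₀, g)).2
  have hF : ⇑F = Prod.map f φ :=
    funext fun ⟨x, g⟩ => Prod.ext (hrange (x, g)) (label_eq g x x₀)
  have hmul : ∀ g h, φ (g * h) = φ g * φ h := fun g h => by
    simp only [φ, hcomp x₀ g h, label_eq h (g⁻¹ • x₀) x₀]
  have : Nonempty X₂ := ⟨f x₀⟩
  have hbij : Function.Bijective φ := (Prod.map_bijective.1 (hF ▸ F.bijective)).2
  exact ⟨MulEquiv.ofBijective (MonoidHom.mk' φ hmul) hbij⟩

/-- If the transformation groupoids `X₁ ⋊ G₁` and `X₂ ⋊ G₂` of actions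
of groups `Gᵢ` on connected spaces `Xᵢ` by homeomorphisms are isomorphic as topological
groupoids — i.e. there are a homeomorphism `F` of arrow spaces and a homeomorphism `f` of
object spaces compatible with range, source, and composition — then `G₁ ≅ G₂`. -/
theorem group_iso_of_transformation_groupoid_iso
    {X₁ G₁ X₂ G₂ : Type*}
    [TopologicalSpace X₁] [ConnectedSpace X₁] [TopologicalSpace G₁] [DiscreteTopology G₁]
    [Group G₁] [MulAction G₁ X₁] [ContinuousConstSMul G₁ X₁]
    [TopologicalSpace X₂] [ConnectedSpace X₂] [TopologicalSpace G₂] [DiscreteTopology G₂]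
    [Group G₂] [MulAction G₂ X₂] [ContinuousConstSMul G₂ X₂]
    (F : (X₁ × G₁) ≃ₜ (X₂ × G₂)) (f : X₁ ≃ₜ X₂)
    (hrange : ∀ p : X₁ × G₁, (F p).1 = f p.1)
    (hsource : ∀ p : X₁ × G₁, (F p).2⁻¹ • (F p).1 = f (p.2⁻¹ • p.1))
    (hcomp : ∀ (x : X₁) (g h : G₁),
      F (x, g * h) = ((F (x, g)).1, (F (x, g)).2 * (F (g⁻¹ • x, h)).2)) :
    Nonempty (G₁ ≃* G₂) :=
  group_iso_of_transformation_groupoid_iso_general F f hrange hcomp
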